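/- Let P be a simple polygon with n ≥ 3 vertices and let s be a point of the interior of P. Then the visibility region V₀(s) weakly covers at least three edges of P; that is, there are at least three distinct edges of P whose relative interior contains a point t with the relative interior of segment[s, t] contained in the interior of P. -/

import Mathlib

open Set

/-- The plane ℝ². -/
abbrev Plane := EuclideanSpace ℝ (Fin 2)

/-- The `i`-th edge of a polygon with vertices `v 0, …, v (n-1)`:
the segment from `v i` to `v ((i+1) % n)`. -/
def polyEdge (n : ℕ) (v : ℕ → Plane) (i : ℕ) : Set Plane :=
  segment ℝ (v i) (v ((i + 1) % n))

/-- `P` is a simple polygon with vertices `v 0, …, v (n-1)`: a compact set with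
nonempty connected interior whose frontier is the union of the `n` edges; the
vertices are pairwise distinct, consecutive edges meet exactly in their common
vertex, and non-consecutive edges are disjoint. -/
def IsSimplePolygon (n : ℕ) (P : Set Plane) (v : ℕ → Plane) : Prop :=
  IsCompact P ∧ IsConnected (interior P) ∧
  (∀ i < n, ∀ j < n, v i = v j → i = j) ∧
  (frontier P = ⋃ i ∈ Finset.range n, polyEdge n v i) ∧
  (∀ i < n, ∀ j < n, i ≠ j →
    (j = (i + 1) % n → polyEdge n v i ∩ polyEdge n v j = {v j}) ∧
    (i = (j + 1) % n → polyEdge n v i ∩ polyEdge n v j = {v i}) ∧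
    (j ≠ (i + 1) % n → i ≠ (j + 1) % n →
      Disjoint (polyEdge n v i) (polyEdge n v j)))

/-- A diffuse reflection path in `P` from `s` to `t` with `m` segments
(`m - 1` reflections), given by the points `p 0 = s, p 1, …, p m = t`:
all points lie in `P`, every intermediate point lies in the relative interior
(open segment) of some edge of `P`, and the relative interior of each segment
of the path lies in the interior of `P`. -/
def IsDiffusePath (n : ℕ) (P : Set Plane) (v : ℕ → Plane)
    (s t : Plane) (m : ℕ) (p : ℕ → Plane) : Prop :=
  p 0 = s ∧ p m = t ∧ (∀ i ≤ m, p i ∈ P) ∧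
  (∀ i, 0 < i → i < m → ∃ j < n, p i ∈ openSegment ℝ (v j) (v ((j + 1) % n))) ∧
  (∀ i < m, openSegment ℝ (p i) (p (i + 1)) ⊆ interior P)

/-- `Vis n P v s k` is `V_k(s)`: the set of points `t ∈ P` reachable from `s`
by a diffuse reflection path with at most `k` reflections. -/
def Vis (n : ℕ) (P : Set Plane) (v : ℕ → Plane) (s : Plane) (k : ℕ) : Set Plane :=
  {t | t ∈ P ∧ ∃ m, m - 1 ≤ k ∧ ∃ p : ℕ → Plane, IsDiffusePath n P v s t m p}

/-!
Shoot rays from `s`. A ray avoiding the finitely many vertices first leaves the interior of `P`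
through the relative interior of an edge, and that edge is weakly covered by `V₀(s)`. Hence the
unit directions towards the weakly covered edges cover the unit circle up to finitely many points,
and, being compact and the circle connected, cover all of it. The directions towards an edge not
containing `s` lie in an open half-plane, and two open half-planes bounded by lines through the
origin never cover the circle: a unit vector on the boundary line of the first and its negative
would both lie in the second. So at least three edges are weakly covered.
-/

open Metric Module

section

variable {E : Type*} [NormedAddCommGroup E] [NormedSpace ℝ E]

theorem isCompact_segment (a b : E) : IsCompact (segment ℝ a b) := by
  rw [← convexHull_pair (𝕜 := ℝ)]
  exact (toFinite _).isCompact_convexHull (𝕜 := ℝ)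

theorem Bornology.IsBounded.exists_nonneg_add_smul_notMem {P : Set E}
    (hP : Bornology.IsBounded P) (s : E) {d : E} (hd : d ≠ 0) :
    ∃ t : ℝ, 0 ≤ t ∧ s + t • d ∉ P := by
  obtain ⟨C, hC⟩ := isBounded_iff_forall_norm_le.mp hP
  have hd' : 0 < ‖d‖ := norm_pos_iff.mpr hd
  set T := (|C| + ‖s‖ + 1) / ‖d‖
  refine ⟨T, by positivity, fun hT ↦ ?_⟩
  have hnorm : ‖T • d‖ = |C| + ‖s‖ + 1 := by
    rw [norm_smul, Real.norm_of_nonneg (by positivity), div_mul_cancel₀ _ hd'.ne']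
  have : ‖T • d‖ ≤ ‖s + T • d‖ + ‖s‖ := by
    simpa using norm_sub_le (s + T • d) s
  linarith [hC _ hT, le_abs_self C]

theorem exists_pos_mem_frontier_openSegment_subset_interior {P : Set E} (hP : IsCompact P)
    {s : E} (hs : s ∈ interior P) {d : E} (hd : d ≠ 0) :
    ∃ t : ℝ, 0 < t ∧ s + t • d ∈ frontier P ∧ openSegment ℝ s (s + t • d) ⊆ interior P := by
  set ray : ℝ → E := fun t ↦ s + t • d
  have hray : Continuous ray := by fun_prop
  set S := {t : ℝ | 0 ≤ t ∧ ray t ∉ interior P}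
  have hS_closed : IsClosed S :=
    isClosed_Ici.inter (isOpen_interior.isClosed_compl.preimage hray)
  have hS_bdd : BddBelow S := ⟨0, fun _ ht ↦ ht.1⟩
  have hS_ne : S.Nonempty :=
    let ⟨T, hT, hTP⟩ := hP.isBounded.exists_nonneg_add_smul_notMem s hd
    ⟨T, hT, fun h ↦ hTP (interior_subset h)⟩
  set t₀ := sInf S
  have ht₀ : t₀ ∈ S := hS_closed.csInf_mem hS_ne hS_bdd
  have h_before : ∀ u, 0 ≤ u → u < t₀ → ray u ∈ interior P := fun u hu hut ↦ by
    by_contra h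
    exact (csInf_le hS_bdd ⟨hu, h⟩).not_gt hut
  have ht₀_pos : 0 < t₀ :=
    ht₀.1.lt_of_ne fun h ↦ ht₀.2 (by simpa [ray, ← h] using hs)
  refine ⟨t₀, ht₀_pos, ⟨?_, ht₀.2⟩, ?_⟩
  · show ray t₀ ∈ closure P
    refine map_mem_closure hray (s := Ico 0 t₀) ?_
      fun u hu ↦ interior_subset (h_before u hu.1 hu.2)
    rw [closure_Ico ht₀_pos.ne]
    exact ⟨ht₀.1, le_rfl⟩
  · rintro _ ⟨a, b, ha, hb, hab, rfl⟩
    obtain rfl : a = 1 - b := by linarith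
    have : (1 - b) • s + b • (s + t₀ • d) = ray (b * t₀) := by simp only [ray]; module
    exact this ▸ h_before _ (by positivity) (by nlinarith)

noncomputable def unitDir (s x : E) : E := ‖x - s‖⁻¹ • (x - s)

theorem unitDir_add_smul (s : E) {d : E} (hd : ‖d‖ = 1) {t : ℝ} (ht : 0 < t) :
    unitDir s (s + t • d) = d := by
  rw [unitDir, add_sub_cancel_left, norm_smul, hd, Real.norm_of_nonneg ht.le, mul_one,
    smul_smul, inv_mul_cancel₀ ht.ne', one_smul]

theorem isCompact_image_unitDir {s : E} {K : Set E} (hK : IsCompact K) (hs : s ∉ K) :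
    IsCompact (unitDir s '' K) := by
  refine hK.image_of_continuousOn (ContinuousOn.smul ?_ (by fun_prop))
  refine (continuous_norm.comp (continuous_sub_right s)).continuousOn.inv₀ fun x hx ↦ ?_
  simpa [sub_eq_zero] using ne_of_mem_of_not_mem hx hs

theorem exists_pos_on_image_unitDir {s : E} {K : Set E} (hK : Convex ℝ K) (hKc : IsClosed K)
    (hs : s ∉ K) : ∃ f : E →L[ℝ] ℝ, ∀ u ∈ unitDir s '' K, 0 < f u := by
  obtain ⟨f, c, hfs, hfK⟩ := geometric_hahn_banach_point_closed hK hKc hs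
  refine ⟨f, ?_⟩
  rintro _ ⟨x, hx, rfl⟩
  have hxs : 0 < ‖x - s‖ := norm_pos_iff.mpr (sub_ne_zero.mpr (ne_of_mem_of_not_mem hx hs))
  have : 0 < f (x - s) := by linarith [map_sub f x s, hfK x hx]
  rw [unitDir, map_smul, smul_eq_mul]
  positivity

theorem sphere_subset_of_subset_union_finite (hE : 1 < Module.rank ℝ E) {F C : Set E}
    (hF : F.Finite) (hC : IsClosed C) (h : sphere (0 : E) 1 ⊆ F ∪ C) :
    sphere (0 : E) 1 ⊆ C := by
  have hconn := isPreconnected_sphere hE (0 : E) 1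
  have : Nontrivial E := rank_pos_iff_nontrivial.mp (zero_lt_one.trans hE)
  obtain ⟨w, hw⟩ := (NormedSpace.sphere_nonempty (x := (0 : E))).mpr zero_le_one
  have hnontriv : (sphere (0 : E) 1).Nontrivial := by
    refine ⟨w, hw, -w, by simpa using hw, fun h ↦ ?_⟩
    have h2 : (2 : ℝ) • w = 0 := by rw [two_smul]; nth_rw 1 [h]; exact neg_add_cancel w
    simp [(smul_eq_zero.mp h2).resolve_left two_ne_zero] at hw
  rcases isPreconnected_iff_subset_of_disjoint_closed.mp hconn C (F \ C) hC
    (hF.sdiff).isClosed (fun x hx ↦ (em (x ∈ C)).imp id fun hxC ↦ ⟨(h hx).resolve_right hxC, hxC⟩)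
    (by ext; simp) with h' | h'
  · exact h'
  · exact absurd (hF.sdiff.subset h') (hconn.infinite_of_nontrivial hnontriv)

theorem exists_norm_eq_one_map_eq_zero (hE : 1 < Module.rank ℝ E) (f : E →L[ℝ] ℝ) :
    ∃ w : E, ‖w‖ = 1 ∧ f w = 0 := by
  have : Nontrivial E := rank_pos_iff_nontrivial.mp (zero_lt_one.trans hE)
  suffices ∃ w : E, w ≠ 0 ∧ f w = 0 by
    obtain ⟨w, hw, hfw⟩ := this
    exact ⟨‖w‖⁻¹ • w, norm_smul_inv_norm hw, by simp [hfw]⟩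
  obtain ⟨x, hx⟩ := exists_ne (0 : E)
  obtain ⟨y, hxy⟩ := exists_linearIndependent_pair_of_one_lt_rank hE hx
  by_cases hfx : f x = 0
  · exact ⟨x, hx, hfx⟩
  refine ⟨f y • x - f x • y, fun h ↦ hfx ?_, by simp [mul_comm]⟩
  exact neg_eq_zero.mp (LinearIndependent.pair_iff.mp hxy _ _ (by simpa [sub_eq_add_neg] using h)).2

theorem two_lt_card_of_sphere_subset_iUnion {ι : Type*} (hE : 1 < Module.rank ℝ E)
    {S : Finset ι} {K : ι → Set E} (hK : ∀ i ∈ S, ∃ f : E →L[ℝ] ℝ, ∀ u ∈ K i, 0 < f u)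
    (h : sphere (0 : E) 1 ⊆ ⋃ i ∈ S, K i) : 2 < S.card := by
  have : Nontrivial E := rank_pos_iff_nontrivial.mp (zero_lt_one.trans hE)
  obtain ⟨w₀, hw₀⟩ := (NormedSpace.sphere_nonempty (x := (0 : E))).mpr zero_le_one
  obtain ⟨i, hi, -⟩ := mem_iUnion₂.mp (h hw₀)
  obtain ⟨f, hf⟩ := hK i hi
  obtain ⟨w, hw, hfw⟩ := exists_norm_eq_one_map_eq_zero hE f
  obtain ⟨a, ha, hwa⟩ := mem_iUnion₂.mp (h (by simpa using hw))
  obtain ⟨b, hb, hwb⟩ := mem_iUnion₂.mp (h (show -w ∈ sphere (0 : E) 1 by simpa using hw))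
  refine Finset.two_lt_card.mpr ⟨i, hi, a, ha, b, hb, ?_, ?_, ?_⟩
  · rintro rfl
    simpa [hfw] using hf w hwa
  · rintro rfl
    simpa [hfw] using hf (-w) hwb
  · rintro rfl
    obtain ⟨g, hg⟩ := hK a ha
    linarith [hg w hwa, hg (-w) hwb, map_neg g w]

end

def WeaklyCoversEdge (n : ℕ) (P : Set Plane) (v : ℕ → Plane) (s : Plane) (k : ℕ) : Prop :=
  ∃ t ∈ openSegment ℝ (v k) (v ((k + 1) % n)), openSegment ℝ s t ⊆ interior P

namespace IsSimplePolygon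

variable {n : ℕ} {P : Set Plane} {v : ℕ → Plane} {s : Plane}

theorem polyEdge_subset_frontier (hP : IsSimplePolygon n P v) {k : ℕ} (hk : k < n) :
    polyEdge n v k ⊆ frontier P :=
  hP.2.2.2.1 ▸ subset_biUnion_of_mem (u := fun i ↦ polyEdge n v i) (Finset.mem_range.mpr hk)

theorem notMem_polyEdge (hP : IsSimplePolygon n P v) (hs : s ∈ interior P) {k : ℕ}
    (hk : k < n) : s ∉ polyEdge n v k :=
  fun h ↦ (hP.polyEdge_subset_frontier hk h).2 hs

theorem exists_weaklyCoversEdge_of_notMem_image_unitDir (hP : IsSimplePolygon n P v)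
    (hs : s ∈ interior P) {d : Plane} (hd : ‖d‖ = 1) (hdv : d ∉ unitDir s '' (v '' Iio n)) :
    ∃ k < n, WeaklyCoversEdge n P v s k ∧ d ∈ unitDir s '' polyEdge n v k := by
  obtain ⟨t, ht, hfront, hseg⟩ :=
    exists_pos_mem_frontier_openSegment_subset_interior hP.1 hs (d := d) (by rintro rfl; simp at hd)
  have hdir := unitDir_add_smul s hd ht
  obtain ⟨k, hk, hxk⟩ : ∃ k < n, s + t • d ∈ polyEdge n v k := by simpa [hP.2.2.2.1] using hfront
  have hnv : ∀ m < n, s + t • d ≠ v m := fun m hm h ↦ hdv ⟨v m, ⟨m, hm, rfl⟩, h ▸ hdir⟩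
  refine ⟨k, hk, ⟨s + t • d, ?_, hseg⟩, _, hxk, hdir⟩
  rw [polyEdge, ← insert_endpoints_openSegment] at hxk
  rcases hxk with h | h | h
  · exact absurd h (hnv k hk)
  · exact absurd h (hnv _ (Nat.mod_lt _ (by omega)))
  · exact h

end IsSimplePolygon

theorem visibility_weakly_covers_three_edges_general (n : ℕ)
    (P : Set Plane) (v : ℕ → Plane)
    (hP : IsSimplePolygon n P v) (s : Plane) (hs : s ∈ interior P) :
    ∃ i j l, i < n ∧ j < n ∧ l < n ∧ i ≠ j ∧ i ≠ l ∧ j ≠ l ∧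
      (∃ t ∈ openSegment ℝ (v i) (v ((i + 1) % n)),
        openSegment ℝ s t ⊆ interior P) ∧
      (∃ t ∈ openSegment ℝ (v j) (v ((j + 1) % n)),
        openSegment ℝ s t ⊆ interior P) ∧
      (∃ t ∈ openSegment ℝ (v l) (v ((l + 1) % n)),
        openSegment ℝ s t ⊆ interior P) := by
  classical
  set S := (Finset.range n).filter (WeaklyCoversEdge n P v s)
  have hPlane : 1 < Module.rank ℝ Plane := one_lt_rank_of_one_lt_finrank (by simp)
  have hS : ∀ k ∈ S, s ∉ polyEdge n v k := fun k hk ↦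
    hP.notMem_polyEdge hs (Finset.mem_range.mp (Finset.mem_filter.mp hk).1)
  have hcover : sphere (0 : Plane) 1 ⊆ ⋃ k ∈ S, unitDir s '' polyEdge n v k := by
    refine sphere_subset_of_subset_union_finite hPlane (((finite_Iio n).image v).image (unitDir s))
      (isClosed_biUnion_finset fun k hk ↦ (isCompact_image_unitDir (isCompact_segment _ _)
        (hS k hk)).isClosed) fun d hd ↦ ?_
    by_cases hdv : d ∈ unitDir s '' (v '' Iio n)
    · exact Or.inl hdv
    obtain ⟨k, hk, hvis, hdk⟩ :=
      hP.exists_weaklyCoversEdge_of_notMem_image_unitDir hs (by simpa using hd) hdv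
    exact Or.inr (mem_iUnion₂.mpr ⟨k, by simp [S, hk, hvis], hdk⟩)
  have hhalf : ∀ k ∈ S, ∃ f : Plane →L[ℝ] ℝ, ∀ u ∈ unitDir s '' polyEdge n v k, 0 < f u :=
    fun k hk ↦ exists_pos_on_image_unitDir (convex_segment _ _) (isCompact_segment _ _).isClosed
      (hS k hk)
  obtain ⟨i, hi, j, hj, l, hl, hij, hil, hjl⟩ :=
    Finset.two_lt_card.mp (two_lt_card_of_sphere_subset_iUnion hPlane hhalf hcover)
  simp only [S, Finset.mem_filter, Finset.mem_range] at hi hj hl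
  exact ⟨i, j, l, hi.1, hj.1, hl.1, hij, hil, hjl, hi.2, hj.2, hl.2⟩

/-- **Proposition (initial coverage).** The visibility region `V₀(s)` of an
interior point `s` weakly covers at least three edges of `P`: there are three
distinct edges whose relative interiors contain points directly visible
from `s`. -/
theorem visibility_weakly_covers_three_edges (n : ℕ) (hn : 3 ≤ n)
    (P : Set Plane) (v : ℕ → Plane)
    (hP : IsSimplePolygon n P v) (s : Plane) (hs : s ∈ interior P) :
    ∃ i j l, i < n ∧ j < n ∧ l < n ∧ i ≠ j ∧ i ≠ l ∧ j ≠ l ∧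
      (∃ t ∈ openSegment ℝ (v i) (v ((i + 1) % n)),
        openSegment ℝ s t ⊆ interior P) ∧
      (∃ t ∈ openSegment ℝ (v j) (v ((j + 1) % n)),
        openSegment ℝ s t ⊆ interior P) ∧
      (∃ t ∈ openSegment ℝ (v l) (v ((l + 1) % n)),
        openSegment ℝ s t ⊆ interior P) :=
  visibility_weakly_covers_three_edges_general n P v hP s hs
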